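/- Let (M, d) be a metric space, γ a ray in M, and γ′ a coray to γ. Then b_γ(x) − b_γ(γ′(0)) ≤ b_{γ′}(x) for all x ∈ M. -/
import Mathlib


open Filter Topology

variable {M : Type*} [MetricSpace M]

/-- A ray in a metric space: a map `γ` defined (in effect) on `[0, ∞)` with
`d(γ s, γ t) = |s - t|` for all `s, t ≥ 0`. -/
def IsRay (γ : ℝ → M) : Prop :=
  ∀ s t : ℝ, 0 ≤ s → 0 ≤ t → dist (γ s) (γ t) = |s - t|

/-- A line in a metric space: a map `γ : ℝ → M` with `d(γ s, γ t) = |s - t|`. -/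
def IsLine (γ : ℝ → M) : Prop :=
  ∀ s t : ℝ, dist (γ s) (γ t) = |s - t|

/-- The Busemann function of a ray `γ`:
`b_γ(x) = lim_{t → ∞} (d(x, γ t) - t)`, which exists and equals the infimum
since `t ↦ d(x, γ t) - t` is nonincreasing on `[0, ∞)` and bounded below. -/
noncomputable def busemann (γ : ℝ → M) (x : M) : ℝ :=
  ⨅ t : Set.Ici (0 : ℝ), (dist x (γ t) - (t : ℝ))

/-- For a line `γ`, the negative ray `γ⁻(t) = γ(-t)`.  (The positive ray `γ⁺`
is just `γ` itself, restricted to `[0, ∞)`.) -/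
def negRay (γ : ℝ → M) : ℝ → M := fun t => γ (-t)

/-- The barrier function of a line `γ`: `B_γ = b_{γ⁺} + b_{γ⁻}`. -/
noncomputable def barrier (γ : ℝ → M) (x : M) : ℝ :=
  busemann γ x + busemann (negRay γ) x

/-- `γ' ≺ γ`: the barrier of `γ` vanishes at `γ' 0` and both Busemann functions
`b_{γ⁺}`, `b_{γ⁻}` calibrate `γ'` (every forward translate of `γ'` is a coray to
`γ⁺` and every backward translate is a coray to `γ⁻`). -/
def Prec (γ' γ : ℝ → M) : Prop :=
  busemann γ (γ' 0) + busemann (negRay γ) (γ' 0) = 0 ∧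
  ∀ t : ℝ, busemann γ (γ' t) = busemann γ (γ' 0) - t ∧
    busemann (negRay γ) (γ' t) = busemann (negRay γ) (γ' 0) + t

/-- A geodesic metric space: any two points are joined by a minimizing geodesic
segment. -/
def IsGeodesicSpace (M : Type*) [MetricSpace M] : Prop :=
  ∀ x y : M, ∃ σ : ℝ → M, σ 0 = x ∧ σ (dist x y) = y ∧
    ∀ s t : ℝ, s ∈ Set.Icc 0 (dist x y) → t ∈ Set.Icc 0 (dist x y) →
      dist (σ s) (σ t) = |s - t|

/-- `γ'` is a coray to the ray `γ`: there are `tᵢ → ∞`, points `xᵢ → γ' 0` and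
minimal geodesic segments `cᵢ` from `xᵢ` to `γ (tᵢ)` of length `Tᵢ = d(xᵢ, γ tᵢ) → ∞`
converging to `γ'` uniformly on compact subintervals of `[0, ∞)`. -/
def IsCoray (γ' γ : ℝ → M) : Prop :=
  ∃ (t : ℕ → ℝ) (x : ℕ → M) (c : ℕ → ℝ → M),
    (∀ i, 0 ≤ t i) ∧
    Tendsto t atTop atTop ∧
    Tendsto x atTop (𝓝 (γ' 0)) ∧
    (∀ i, c i 0 = x i) ∧
    (∀ i, c i (dist (x i) (γ (t i))) = γ (t i)) ∧
    (∀ i, ∀ s s' : ℝ, s ∈ Set.Icc 0 (dist (x i) (γ (t i))) →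
      s' ∈ Set.Icc 0 (dist (x i) (γ (t i))) → dist (c i s) (c i s') = |s - s'|) ∧
    Tendsto (fun i => dist (x i) (γ (t i))) atTop atTop ∧
    (∀ K > (0 : ℝ), ∀ ε > (0 : ℝ), ∃ N : ℕ, ∀ i ≥ N,
      ∀ s ∈ Set.Icc (0 : ℝ) K, dist (c i s) (γ' s) < ε)

/-- The line `γ` has the uniqueness property: through each point of the zero set
of `B_γ` there is at most one line `γ''` with `γ'' ≺ γ`. -/
def HasUniqueCalibLine (γ : ℝ → M) : Prop :=
  ∀ x : M, barrier γ x = 0 →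
    ∀ γ₁ γ₂ : ℝ → M, IsLine γ₁ → IsLine γ₂ → γ₁ 0 = x → γ₂ 0 = x →
      Prec γ₁ γ → Prec γ₂ γ → γ₁ = γ₂

lemma busemann_bddBelow (γ : ℝ → M) (hγ : IsRay γ) (x : M) :
    BddBelow (Set.range fun t : Set.Ici (0 : ℝ) => dist x (γ t) - (t : ℝ)) := by
  refine ⟨-dist x (γ 0), ?_⟩
  rintro r ⟨⟨t, ht⟩, rfl⟩
  have h1 : dist (γ 0) (γ t) = t := by
    have ht' : (0:ℝ) ≤ t := ht
    rw [hγ 0 t le_rfl ht', abs_sub_comm, abs_of_nonneg (by linarith : (0:ℝ) ≤ t - 0)]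
    ring
  have h2 := dist_triangle (γ 0) x (γ t)
  have h3 : dist (γ 0) x = dist x (γ 0) := dist_comm _ _
  have ht' : (0:ℝ) ≤ t := ht
  dsimp
  linarith

lemma busemann_le_aux (γ : ℝ → M) (hγ : IsRay γ) (x : M) {t : ℝ} (ht : 0 ≤ t) :
    busemann γ x ≤ dist x (γ t) - t :=
  ciInf_le (busemann_bddBelow γ hγ x) (⟨t, ht⟩ : Set.Ici (0:ℝ))

lemma busemann_lip (γ : ℝ → M) (hγ : IsRay γ) (x y : M) :
    busemann γ x ≤ dist x y + busemann γ y := by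
  have : busemann γ x - dist x y ≤ busemann γ y := by
    apply le_ciInf
    rintro ⟨t, ht⟩
    have h1 := busemann_le_aux γ hγ x ht
    have h2 := dist_triangle x y (γ t)
    dsimp
    linarith
  linarith

lemma busemann_coray_calib (γ γ' : ℝ → M) (hγ : IsRay γ) (hγ' : IsRay γ')
    (hc : IsCoray γ' γ) {s : ℝ} (hs : 0 ≤ s) :
    busemann γ (γ' s) ≤ busemann γ (γ' 0) - s := by
  obtain ⟨t, x, c, htpos, htt, hxt, hc0, hcT, hciso, hTt, hunif⟩ := hc
  refine le_of_forall_pos_le_add ?_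
  intro ε hε
  -- choose t₀ with dist (γ' 0) (γ t₀) - t₀ < busemann γ (γ' 0) + ε/3
  have hlt : busemann γ (γ' 0) < busemann γ (γ' 0) + ε / 3 := by linarith
  obtain ⟨⟨t₀, ht₀⟩, ht₀lt⟩ := exists_lt_of_ciInf_lt hlt
  dsimp at ht₀lt
  -- choose large index i
  obtain ⟨N₁, hN₁⟩ := (htt.eventually_ge_atTop t₀).exists_forall_of_atTop
  obtain ⟨N₂, hN₂⟩ := (Metric.tendsto_atTop.mp hxt (ε/3) (by linarith))
  obtain ⟨N₃, hN₃⟩ := (hTt.eventually_ge_atTop s).exists_forall_of_atTop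
  obtain ⟨N₄, hN₄⟩ := hunif (s + 1) (by linarith) (ε/3) (by linarith)
  set i := max (max N₁ N₂) (max N₃ N₄) with hi
  have hi1 : N₁ ≤ i := le_trans (le_max_left _ _) (le_max_left _ _)
  have hi2 : N₂ ≤ i := le_trans (le_max_right _ _) (le_max_left _ _)
  have hi3 : N₃ ≤ i := le_trans (le_max_left _ _) (le_max_right _ _)
  have hi4 : N₄ ≤ i := le_trans (le_max_right _ _) (le_max_right _ _)
  have hti : t₀ ≤ t i := hN₁ i hi1
  have hxi : dist (x i) (γ' 0) < ε / 3 := hN₂ i hi2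
  have hTi : s ≤ dist (x i) (γ (t i)) := hN₃ i hi3
  have hci : dist (c i s) (γ' s) < ε / 3 :=
    hN₄ i hi4 s ⟨hs, by linarith⟩
  have htipos : 0 ≤ t i := htpos i
  -- monotonicity: dist (γ' 0) (γ (t i)) - t i ≤ dist (γ' 0) (γ t₀) - t₀
  have hmono : dist (γ' 0) (γ (t i)) - t i ≤ dist (γ' 0) (γ t₀) - t₀ := by
    have h1 := dist_triangle (γ' 0) (γ t₀) (γ (t i))
    have h2 : dist (γ t₀) (γ (t i)) = t i - t₀ := by
      rw [hγ t₀ (t i) ht₀ htipos, abs_sub_comm, abs_of_nonneg (by linarith)]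
    linarith
  -- dist (c i s) (γ (t i)) = T i - s
  have hseg : dist (c i s) (γ (t i)) = dist (x i) (γ (t i)) - s := by
    have := hciso i s (dist (x i) (γ (t i)))
      ⟨hs, hTi⟩ ⟨dist_nonneg, le_rfl⟩
    rw [hcT i] at this
    rw [this, abs_sub_comm, abs_of_nonneg (by linarith)]
  -- T i bound
  have hTbound : dist (x i) (γ (t i)) ≤ dist (x i) (γ' 0) + dist (γ' 0) (γ (t i)) :=
    dist_triangle _ _ _
  -- conclude
  have h1 : busemann γ (γ' s) ≤ dist (γ' s) (γ (t i)) - t i :=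
    busemann_le_aux γ hγ _ htipos
  have h2 : dist (γ' s) (γ (t i)) ≤ dist (γ' s) (c i s) + dist (c i s) (γ (t i)) :=
    dist_triangle _ _ _
  have h3 : dist (γ' s) (c i s) = dist (c i s) (γ' s) := dist_comm _ _
  linarith

/-- if the ray `γ'` is a coray to the ray `γ`, then
`b_γ(x) - b_γ(γ' 0) ≤ b_{γ'}(x)` for all `x`. -/
theorem busemann_sub_le_busemann_of_coray (γ γ' : ℝ → M)
    (hγ : IsRay γ) (hγ' : IsRay γ') (hc : IsCoray γ' γ) :
    ∀ x : M, busemann γ x - busemann γ (γ' 0) ≤ busemann γ' x := by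
  intro x
  have key : busemann γ x - busemann γ (γ' 0) ≤
      ⨅ p : Set.Ici (0 : ℝ), (dist x (γ' p) - (p : ℝ)) := by
    apply le_ciInf
    rintro ⟨s, hs⟩
    have hs' : (0:ℝ) ≤ s := hs
    have h1 := busemann_lip γ hγ x (γ' s)
    have h2 := busemann_coray_calib γ γ' hγ hγ' hc hs'
    dsimp
    linarith
  exact key
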